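/- Let (F^t)_{t≥0} be a family of maps on H^s(𝕋²) (s > 2) preserving the enstrophy G(u) = ∫_{𝕋²} ω² dx (where ω is the vorticity of u) and preserving the mean-zero condition. Then for any mean-zero ũ ∈ H^s(𝕋²), any δ > 0, and any T > 0, there exist u* ∈ H^s(𝕋²) with G(u*) ≤ 2G(ũ) and an infinite increasing sequence of positive integers (m_j) such that ‖F^{m_j T}(ũ) − u*‖_{L²(𝕋²)} < δ for all j. -/
import Mathlib


/-- `|k|² = k₁² + k₂²`. -/
noncomputable def nsq (k : ℤ × ℤ) : ℝ := (k.1 : ℝ) ^ 2 + (k.2 : ℝ) ^ 2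

/-- Enstrophy `G(u) = ∫ ω² = Σ_k |ω(k)|²`, in terms of the Fourier
coefficients `w` of the vorticity `ω`. -/
noncomputable def enstrophy (w : ℤ × ℤ → ℂ) : ℝ := ∑' k, ‖w k‖ ^ 2

/-- The Sobolev class `H^s` of divergence-free mean-zero velocity fields on
`𝕋²`, described by the vorticity Fourier coefficients `w`: mean zero means
`w 0 = 0`, and `‖u‖²_{H^s} = Σ |k|^{2s}|u(k)|² = Σ |k|^{2(s-1)}|w(k)|² < ∞`
by the Biot–Savart law `|u(k)| = |k|⁻¹|w(k)|`. -/
def HsClass (s : ℝ) : Set (ℤ × ℤ → ℂ) :=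
  {w | w 0 = 0 ∧ Summable fun k => nsq k ^ (s - 1) * ‖w k‖ ^ 2}

/-- The `L²` (kinetic-energy) distance between the velocity fields with
vorticity coefficients `w` and `v`: `‖u - u'‖²_{L²} = Σ |k|⁻²|w(k) - v(k)|²`. -/
noncomputable def l2dist (w v : ℤ × ℤ → ℂ) : ℝ :=
  Real.sqrt (∑' k, ‖w k - v k‖ ^ 2 / nsq k)

lemma nsq_nonneg (k : ℤ × ℤ) : 0 ≤ nsq k := by
  unfold nsq; positivity

lemma one_le_nsq {k : ℤ × ℤ} (hk : k ≠ 0) : 1 ≤ nsq k := by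
  unfold nsq
  have h : k.1 ≠ 0 ∨ k.2 ≠ 0 := by
    by_contra hc; push_neg at hc; exact hk (Prod.ext hc.1 hc.2)
  have key : ∀ n : ℤ, n ≠ 0 → (1:ℝ) ≤ (n:ℝ)^2 := by
    intro n hn
    have : (1:ℤ) ≤ n^2 := by rcases lt_or_gt_of_ne hn with h | h <;> nlinarith
    exact_mod_cast this
  rcases h with h | h
  · nlinarith [key _ h, sq_nonneg (k.2:ℝ)]
  · nlinarith [key _ h, sq_nonneg (k.1:ℝ)]

lemma summable_sq {s : ℝ} (hs : 2 < s) {w : ℤ × ℤ → ℂ} (hw : w ∈ HsClass s) :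
    Summable fun k => ‖w k‖ ^ 2 := by
  refine hw.2.of_nonneg_of_le (fun k => by positivity) (fun k => ?_)
  by_cases hk : k = 0
  · subst hk; rw [hw.1]; simp
  · have h1 : 1 ≤ nsq k := one_le_nsq hk
    have : (1:ℝ) ≤ nsq k ^ (s - 1) := Real.one_le_rpow h1 (by linarith)
    nlinarith [sq_nonneg ‖w k‖]

lemma key_dist (δ ε N G0 : ℝ) (hδ : 0 < δ) (hG0 : 0 ≤ G0)
    (Lfin : Finset (ℤ × ℤ))
    (a b : ℤ × ℤ → ℂ)
    (hsa : Summable fun k => ‖a k‖ ^ 2) (hsb : Summable fun k => ‖b k‖ ^ 2)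
    (hGa : ∑' k, ‖a k‖ ^ 2 ≤ G0) (hGb : ∑' k, ‖b k‖ ^ 2 ≤ G0)
    (hN : 0 < N)
    (htail : ∀ k, k ∉ Lfin → N ≤ nsq k)
    (hτ : 4 * G0 / N ≤ δ ^ 2 / 4)
    (hlow : ∀ k ∈ Lfin, ‖a k - b k‖ < 2 * ε)
    (hcard : (Lfin.card : ℝ) * (2 * ε) ^ 2 ≤ δ ^ 2 / 4) :
    l2dist a b < δ := by
  classical
  set f : ℤ × ℤ → ℝ := fun k => ‖a k - b k‖ ^ 2 / nsq k with hf
  have hd : ∀ k, ‖a k - b k‖ ^ 2 ≤ 2 * ‖a k‖ ^ 2 + 2 * ‖b k‖ ^ 2 := by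
    intro k
    have h1 := norm_sub_le (a k) (b k)
    nlinarith [norm_nonneg (a k), norm_nonneg (b k), norm_nonneg (a k - b k),
      sq_nonneg (‖a k‖ - ‖b k‖)]
  have hsd : Summable fun k => 2 * ‖a k‖ ^ 2 + 2 * ‖b k‖ ^ 2 :=
    (hsa.mul_left 2).add (hsb.mul_left 2)
  have hfle : ∀ k, f k ≤ ‖a k - b k‖ ^ 2 := by
    intro k
    by_cases hk : k = 0
    · subst hk
      have : nsq 0 = 0 := by simp [nsq]
      simp [hf, this]
    · exact div_le_self (by positivity) (one_le_nsq hk)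
  have hf0 : ∀ k, 0 ≤ f k := fun k => div_nonneg (by positivity) (nsq_nonneg k)
  have hfs : Summable f :=
    Summable.of_nonneg_of_le hf0 (fun k => (hfle k).trans (hd k)) hsd
  have hlowsum : ∑ k ∈ Lfin, f k ≤ δ ^ 2 / 4 := by
    have h1 : ∑ k ∈ Lfin, f k ≤ Lfin.card • ((2 * ε) ^ 2) := by
      refine Finset.sum_le_card_nsmul _ _ _ (fun k hk => ?_)
      have h2 := hlow k hk
      have h3 := norm_nonneg (a k - b k)
      nlinarith [hfle k]
    rw [nsmul_eq_mul] at h1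
    exact h1.trans hcard
  have htailsum : ∑' (k : ↑((↑Lfin : Set (ℤ × ℤ))ᶜ)), f ↑k ≤ δ ^ 2 / 4 := by
    have h1 : ∑' (k : ↑((↑Lfin : Set (ℤ × ℤ))ᶜ)), f ↑k ≤
        ∑' (k : ↑((↑Lfin : Set (ℤ × ℤ))ᶜ)), (2 * ‖a ↑k‖ ^ 2 + 2 * ‖b ↑k‖ ^ 2) / N := by
      refine Summable.tsum_le_tsum (fun k => ?_) (hfs.subtype _) ((hsd.div_const N).subtype _)
      have hk := k.2
      rw [Set.mem_compl_iff, Finset.mem_coe] at hk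
      exact div_le_div₀ (by positivity) (hd _) hN (htail _ hk)
    have h2 : ∑' (k : ↑((↑Lfin : Set (ℤ × ℤ))ᶜ)), (2 * ‖a ↑k‖ ^ 2 + 2 * ‖b ↑k‖ ^ 2) / N ≤
        ∑' k, (2 * ‖a k‖ ^ 2 + 2 * ‖b k‖ ^ 2) / N := by
      refine Summable.tsum_subtype_le _ _ (fun k => by positivity) (hsd.div_const N)
    have h3 : ∑' k, (2 * ‖a k‖ ^ 2 + 2 * ‖b k‖ ^ 2) / N ≤ 4 * G0 / N := by
      rw [tsum_div_const]
      have hab : ∑' k, (2 * ‖a k‖ ^ 2 + 2 * ‖b k‖ ^ 2) ≤ 4 * G0 := by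
        rw [Summable.tsum_add (hsa.mul_left 2) (hsb.mul_left 2), tsum_mul_left, tsum_mul_left]
        linarith
      gcongr
    linarith
  have hkey : ∑' k, f k < δ ^ 2 := by
    have := Summable.sum_add_tsum_compl (s := Lfin) hfs
    have hδ2 : 0 < δ ^ 2 := by positivity
    linarith
  rw [l2dist, Real.sqrt_lt' hδ]
  exact hkey

lemma aux_N (G0 δ : ℝ) (hG0 : 0 ≤ G0) (hδ : 0 < δ) :
    ∃ N : ℝ, 1 ≤ N ∧ 4 * G0 / N ≤ δ ^ 2 / 4 := by
  refine ⟨max 1 (16 * (G0 + 1) / δ ^ 2), le_max_left _ _, ?_⟩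
  have hNpos : (0:ℝ) < max 1 (16 * (G0 + 1) / δ ^ 2) :=
    lt_of_lt_of_le one_pos (le_max_left _ _)
  have h1 : 16 * (G0 + 1) / δ ^ 2 ≤ max 1 (16 * (G0 + 1) / δ ^ 2) := le_max_right _ _
  rw [div_le_div_iff₀ hNpos (by norm_num)]
  have h2 : δ ^ 2 * (16 * (G0 + 1) / δ ^ 2) ≤ δ ^ 2 * max 1 (16 * (G0 + 1) / δ ^ 2) :=
    mul_le_mul_of_nonneg_left h1 (by positivity)
  have h3 : δ ^ 2 * (16 * (G0 + 1) / δ ^ 2) = 16 * (G0 + 1) := by field_simp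
  nlinarith

lemma aux_box (N : ℝ) (hN1 : 1 ≤ N) :
    ∃ L : Finset (ℤ × ℤ), ∀ k ∉ L, N ≤ nsq k := by
  set M : ℕ := ⌈N⌉₊ with hMdef
  have hMN : N ≤ (M : ℝ) := Nat.le_ceil N
  refine ⟨Finset.Icc (-(M : ℤ), -(M : ℤ)) ((M : ℤ), (M : ℤ)), ?_⟩
  intro k hk
  by_contra hlt
  push_neg at hlt
  apply hk
  have habs : ∀ n : ℤ, (n : ℝ) ^ 2 < N → -(M : ℤ) ≤ n ∧ n ≤ (M : ℤ) := by
    intro n hn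
    have h1 : |n| ≤ (M : ℤ) := by
      by_contra h2
      push_neg at h2
      have h3 : ((M : ℤ) + 1 : ℤ) ≤ |n| := h2
      have h4 : ((M : ℝ) + 1) ≤ |(n : ℝ)| := by exact_mod_cast h3
      have h5 : ((M : ℝ) + 1) ^ 2 ≤ (n : ℝ) ^ 2 := by
        calc ((M : ℝ) + 1) ^ 2 ≤ |(n : ℝ)| ^ 2 := by nlinarith [abs_nonneg (n : ℝ)]
          _ = (n : ℝ) ^ 2 := sq_abs _
      nlinarith [sq_nonneg ((M : ℝ) - 1)]
    exact abs_le.mp h1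
  have hk1 : (k.1 : ℝ) ^ 2 < N := by
    unfold nsq at hlt; nlinarith [sq_nonneg (k.2 : ℝ)]
  have hk2 : (k.2 : ℝ) ^ 2 < N := by
    unfold nsq at hlt; nlinarith [sq_nonneg (k.1 : ℝ)]
  rw [Finset.mem_Icc]
  obtain ⟨ha1, ha2⟩ := habs _ hk1
  obtain ⟨hb1, hb2⟩ := habs _ hk2
  exact ⟨⟨ha1, hb1⟩, ⟨ha2, hb2⟩⟩

lemma aux_eps (δ c : ℝ) (hδ : 0 < δ) (hc : 0 ≤ c) :
    ∃ ε : ℝ, 0 < ε ∧ c * (2 * ε) ^ 2 ≤ δ ^ 2 / 4 := by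
  have hsqpos : 0 < Real.sqrt (c + 1) := Real.sqrt_pos.mpr (by linarith)
  have hs2 : Real.sqrt (c + 1) ^ 2 = c + 1 := Real.sq_sqrt (by linarith)
  refine ⟨δ / (4 * Real.sqrt (c + 1)), by positivity, ?_⟩
  have h1 : (2 * (δ / (4 * Real.sqrt (c + 1)))) ^ 2 = δ ^ 2 / (4 * (c + 1)) := by
    rw [mul_pow, div_pow, mul_pow, hs2]
    field_simp
    ring
  rw [h1, mul_div_assoc', div_le_div_iff₀ (by positivity) (by norm_num : (0:ℝ) < 4)]
  nlinarith [sq_nonneg δ, mul_nonneg hc (sq_nonneg δ)]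


/-- Recurrence theorem for the 2D Euler equation (Fourier-side model): if the
flow `F^t` preserves the enstrophy and the mean-zero `H^s` class (`s > 2`),
then every `H^s` solution returns repeatedly to an arbitrarily small `L²`
neighborhood of some `u*` in the enstrophy ball `{G ≤ 2 G(ũ)}`. -/
theorem stmt_12 (s : ℝ) (hs : 2 < s)
    (F : ℝ → (ℤ × ℤ → ℂ) → (ℤ × ℤ → ℂ))
    (hG : ∀ t ≥ (0 : ℝ), ∀ w ∈ HsClass s, enstrophy (F t w) = enstrophy w)
    (hH : ∀ t ≥ (0 : ℝ), ∀ w ∈ HsClass s, F t w ∈ HsClass s)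
    (wtil : ℤ × ℤ → ℂ) (hwtil : wtil ∈ HsClass s)
    (δ : ℝ) (hδ : 0 < δ) (T : ℝ) (hT : 0 < T) :
    ∃ wstar ∈ HsClass s, enstrophy wstar ≤ 2 * enstrophy wtil ∧
      ∃ m : ℕ → ℕ, StrictMono m ∧ (∀ j, 0 < m j) ∧
        ∀ j, l2dist (F (m j * T) wtil) wstar < δ := by  classical
  have hG0 : 0 ≤ enstrophy wtil := tsum_nonneg fun k => by positivity
  set v : ℕ → ℤ × ℤ → ℂ := fun n => F (((n : ℝ) + 1) * T) wtil with hvdef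
  have htpos : ∀ n : ℕ, (0 : ℝ) ≤ ((n : ℝ) + 1) * T := fun n => by positivity
  have hvH : ∀ n, v n ∈ HsClass s := fun n => hH _ (htpos n) _ hwtil
  have hvG : ∀ n, (∑' k, ‖v n k‖ ^ 2) = enstrophy wtil := fun n => hG _ (htpos n) _ hwtil
  have hvs : ∀ n, Summable fun k => ‖v n k‖ ^ 2 := fun n => summable_sq hs (hvH n)
  obtain ⟨N, hN1, hτ⟩ := aux_N (enstrophy wtil) δ hG0 hδ
  have hNpos : (0:ℝ) < N := lt_of_lt_of_le one_pos hN1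
  obtain ⟨Lfin, htail⟩ := aux_box N hN1
  obtain ⟨ε, hε, hcard⟩ := aux_eps δ (Lfin.card : ℝ) hδ (Nat.cast_nonneg _)
  have hmem : ∀ n, v n ∈ Set.univ.pi
      fun _ : ℤ × ℤ => Metric.closedBall (0 : ℂ) (Real.sqrt (enstrophy wtil)) := by
    intro n
    rw [Set.mem_univ_pi]
    intro k
    rw [Metric.mem_closedBall, dist_zero_right]
    have h1 : ‖v n k‖ ^ 2 ≤ enstrophy wtil := by
      have h2 := Summable.le_tsum (hvs n) k (fun j _ => by positivity)
      calc ‖v n k‖ ^ 2 ≤ ∑' j, ‖v n j‖ ^ 2 := h2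
        _ = enstrophy wtil := hvG n
    calc ‖v n k‖ = Real.sqrt (‖v n k‖ ^ 2) := (Real.sqrt_sq (norm_nonneg _)).symm
      _ ≤ Real.sqrt (enstrophy wtil) := Real.sqrt_le_sqrt h1
  obtain ⟨x, -, φ, hφ, hconv⟩ :=
    (isCompact_univ_pi fun _ : ℤ × ℤ =>
      isCompact_closedBall (0 : ℂ) (Real.sqrt (enstrophy wtil))).tendsto_subseq hmem
  have hptw : ∀ k, Filter.Tendsto (fun n => v (φ n) k) Filter.atTop (nhds (x k)) :=
    fun k => tendsto_pi_nhds.mp hconv k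
  have hev : ∀ᶠ n in Filter.atTop, ∀ k ∈ Lfin, dist (v (φ n) k) (x k) < ε := by
    rw [Filter.eventually_all_finset]
    intro k _
    exact Metric.tendsto_nhds.mp (hptw k) ε hε
  obtain ⟨N₀, hN₀⟩ := Filter.eventually_atTop.mp hev
  refine ⟨v (φ N₀), hvH _, ?_, fun j => φ (N₀ + 1 + j) + 1, ?_, fun j => Nat.succ_pos _, ?_⟩
  · have h1 : enstrophy (v (φ N₀)) = enstrophy wtil := hvG _
    linarith
  · intro i j hij
    have := hφ (show N₀ + 1 + i < N₀ + 1 + j by omega)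
    exact Nat.succ_lt_succ this
  · intro j
    have hcast : ((φ (N₀ + 1 + j) + 1 : ℕ) : ℝ) * T = ((φ (N₀ + 1 + j) : ℝ) + 1) * T := by
      push_cast; ring
    rw [hcast]
    show l2dist (v (φ (N₀ + 1 + j))) (v (φ N₀)) < δ
    refine key_dist δ ε N (enstrophy wtil) hδ hG0 Lfin _ _ (hvs _) (hvs _)
      (le_of_eq (hvG _)) (le_of_eq (hvG _)) hNpos htail hτ ?_ hcard
    intro k hk
    have h1 := hN₀ (N₀ + 1 + j) (by omega) k hk
    have h2 := hN₀ N₀ le_rfl k hk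
    rw [← dist_eq_norm]
    calc dist (v (φ (N₀ + 1 + j)) k) (v (φ N₀) k)
        ≤ dist (v (φ (N₀ + 1 + j)) k) (x k) + dist (x k) (v (φ N₀) k) := dist_triangle _ _ _
      _ < ε + ε := by rw [dist_comm (x k)]; exact add_lt_add h1 h2
      _ = 2 * ε := by ring
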